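/- arXiv:1206.5504 — 3 statements merged into one kernel-verified Lean document; each statement's English description precedes it below -/
import Mathlib

section
/- Let (q₀, B₀) be a quadratic vector space and (q₁, B₁) a symplectic vector space over ℂ. Let C₀, C₀' be endomorphisms of q₀ skew-symmetric with respect to B₀, and let C₁, C₁' be endomorphisms of q₁ skew-symmetric with respect to B₁, with C₁ ≠ 0. Then the following are equivalent: (i) there exist invertible linear maps P of q₀ and Q of q₁ and a nonzero λ ∈ ℂ such that C₀' = λ • (P ∘ C₀ ∘ P⁻¹), B₀(P(C₀ x), P y) = B₀(C₀ x, y) for all x, y ∈ q₀, C₁' = λ • (Q ∘ C₁ ∘ Q⁻¹), and B₁(Q(C₁ u), Q v) = B₁(C₁ u, v) for all u, v ∈ q₁; (ii) there exist a nonzero μ ∈ ℂ, an isometry P' of (q₀, B₀) and an isometry Q' of (q₁, B₁) such that C₀' = μ • (P' ∘ C₀ ∘ P'⁻¹) and C₁' = μ • (Q' ∘ C₁ ∘ Q'⁻¹). (This is the linear-algebra content of Theorems 3 and 4: two singular quadratic Lie superalgebras of type S₁, realized as double extensions by C₀ + C₁ and C₀' + C₁', are isomorphic if and only if they are isometrically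 isomorphic.) -/
/-!
If `P` preserves `B` on the image of `C`, the Gram operator `U = P† P` (adjoint taken with
respect to `B`) satisfies `U C = C = C U`, and it is `B`-self-adjoint because `B` is symmetric
or alternating. Being invertible, `U` has a square root `S` that is a polynomial in `U`: lift
`√X` modulo each primary factor `(X - α)ᵏ` of its minimal polynomial by Newton's iteration and
glue the pieces by the Chinese remainder theorem. Then `S` is self-adjoint and commutes with `C`,
so `P S⁻¹` is an isometry conjugating `C` exactly as `P` does. The converse is immediate.
-/

open Function Polynomial LinearMap

theorem Polynomial.exists_eval_eq_and_X_sub_C_pow_dvd_sq_sub_X {K : Type*} [Field K]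
    [NeZero (2 : K)] {β : K} (hβ : β ≠ 0) (k : ℕ) :
    ∃ p : K[X], p.eval (β ^ 2) = β ∧ (X - C (β ^ 2)) ^ (k + 1) ∣ p ^ 2 - X := by
  induction k with
  | zero => exact ⟨C β, eval_C, -1, by rw [C_pow]; ring⟩
  | succ k ih =>
    obtain ⟨p, hp, q, hq⟩ := ih
    set t := -q.eval (β ^ 2) / (2 * β)
    have hroot : X - C (β ^ 2) ∣ q + 2 * C t * p := by
      rw [dvd_iff_isRoot, IsRoot, eval_add, eval_mul, eval_mul, eval_C, hp, eval_ofNat]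
      simp only [t]
      field_simp
      ring
    obtain ⟨r, hr⟩ := hroot
    refine ⟨p + C t * (X - C (β ^ 2)) ^ (k + 1), by simp [hp], ?_⟩
    exact ⟨r + C t ^ 2 * (X - C (β ^ 2)) ^ k,
      by linear_combination hq + (X - C (β ^ 2)) ^ (k + 1) * hr⟩

theorem exists_pow_sub_dvd_prod_of_pairwise_isCoprime {R ι : Type*} [CommRing R] [Fintype ι]
    {m : ι → R} (hm : Pairwise (IsCoprime on m)) {g : R} {n : ℕ}
    (h : ∀ i, ∃ p, m i ∣ p ^ n - g) : ∃ p, ∏ i, m i ∣ p ^ n - g := by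
  choose p hp using h
  obtain ⟨r, hr⟩ := Ideal.exists_forall_sub_mem_ideal (I := fun i ↦ Ideal.span {m i})
    (fun i j hij ↦ (Ideal.isCoprime_span_singleton_iff _ _).mpr (hm hij)) p
  refine ⟨r, Fintype.prod_dvd_of_coprime hm fun i ↦ ?_⟩
  rw [← sub_add_sub_cancel _ (p i ^ n)]
  exact dvd_add ((Ideal.mem_span_singleton.mp (hr i)).trans (sub_dvd_pow_sub_pow _ _ _)) (hp i)

theorem Module.End.exists_aeval_sq_eq_of_isUnit {K V : Type*} [Field K] [IsAlgClosed K]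
    [NeZero (2 : K)] [AddCommGroup V] [Module K V] [FiniteDimensional K V]
    {f : Module.End K V} (hf : IsUnit f) : ∃ p : K[X], aeval f p ^ 2 = f := by
  classical
  set m := minpoly K f
  have hroot_ne : ∀ α ∈ m.roots.toFinset, α ≠ 0 := by
    rintro α hα rfl
    have : f.HasEigenvalue 0 :=
      Module.End.hasEigenvalue_iff_isRoot.mpr (isRoot_of_mem_roots (Multiset.mem_toFinset.mp hα))
    exact (spectrum.zero_mem_iff K).mp (Module.End.hasEigenvalue_iff_mem_spectrum.mp this) hf
  have hlocal : ∀ α : m.roots.toFinset, ∃ p : K[X],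
      (X - C (α : K)) ^ m.roots.count (α : K) ∣ p ^ 2 - X := by
    rintro ⟨α, hα⟩
    obtain ⟨β, rfl⟩ := IsAlgClosed.exists_pow_nat_eq α two_pos
    obtain ⟨p, -, hp⟩ := exists_eval_eq_and_X_sub_C_pow_dvd_sq_sub_X
      (pow_ne_zero_iff two_ne_zero |>.mp (hroot_ne _ hα)) (m.roots.count (β ^ 2))
    exact ⟨p, (pow_dvd_pow _ (Nat.le_succ _)).trans hp⟩
  have hcop : Pairwise (IsCoprime on
      fun α : m.roots.toFinset ↦ (X - C (α : K)) ^ m.roots.count (α : K)) :=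
    fun α β hαβ ↦ (pairwise_coprime_X_sub_C Subtype.val_injective hαβ).pow
  obtain ⟨p, hp⟩ := exists_pow_sub_dvd_prod_of_pairwise_isCoprime hcop hlocal
  have hprod : ∏ α : m.roots.toFinset, (X - C (α : K)) ^ m.roots.count (α : K) = m := by
    rw [Finset.prod_coe_sort m.roots.toFinset (fun α ↦ (X - C α) ^ m.roots.count (α : K)),
      ← Finset.prod_multiset_map_count,
      ← (IsAlgClosed.splits m).eq_prod_roots_of_monic
        (minpoly.monic (Algebra.IsIntegral.isIntegral f))]
  rw [hprod, minpoly.dvd_iff, map_sub, aeval_X, sub_eq_zero, map_pow] at hp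
  exact ⟨p, hp⟩

theorem Commute.aeval_left {R A : Type*} [CommSemiring R] [Semiring A] [Algebra R A] {a b : A}
    (h : Commute a b) (p : R[X]) : Commute (aeval a p) b := by
  induction p using Polynomial.induction_on' with
  | add p q hp hq => simpa only [map_add] using hp.add_left hq
  | monomial n r =>
    simpa only [aeval_monomial] using (Algebra.commute_algebraMap_left r b).mul_left (h.pow_left n)

theorem LinearMap.IsAdjointPair.aeval {R M : Type*} [CommRing R] [AddCommGroup M] [Module R M]
    {B : LinearMap.BilinForm R M} {f : Module.End R M} (hf : IsAdjointPair B B f f) (p : R[X]) :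
    IsAdjointPair B B (aeval f p) (aeval f p) := by
  have hpow : ∀ n : ℕ, IsAdjointPair B B ⇑(f ^ n) ⇑(f ^ n) := by
    intro n
    induction n with
    | zero => exact isAdjointPair_one
    | succ n ih => simpa only [← pow_succ, ← pow_succ'] using ih.mul hf
  induction p using Polynomial.induction_on' with
  | add p q hp hq => rw [map_add]; exact hp.add hq
  | monomial n r =>
    simpa only [aeval_monomial, ← Algebra.smul_def, LinearMap.coe_smul] using (hpow n).smul r

namespace LinearMap.BilinForm

variable {K V : Type*} [Field K] [AddCommGroup V] [Module K V] [FiniteDimensional K V]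
  {B : LinearMap.BilinForm K V}

theorem isAdjointPair_leftAdjointOfNondegenerate_mul_self (hB : B.Nondegenerate) {ε : K}
    (hε : ε * ε = 1) (hsymm : ∀ x y, B x y = ε * B y x) (P : Module.End K V) :
    IsAdjointPair B B ⇑(B.leftAdjointOfNondegenerate hB P * P)
      ⇑(B.leftAdjointOfNondegenerate hB P * P) := by
  have hadj := B.isAdjointPairLeftAdjointOfNondegenerate hB P
  intro x y
  calc B (B.leftAdjointOfNondegenerate hB P (P x)) y = B (P x) (P y) := hadj _ _
    _ = ε * (ε * B x (B.leftAdjointOfNondegenerate hB P (P y))) := by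
      rw [hsymm, ← hadj, hsymm]
    _ = _ := by rw [← mul_assoc, hε, one_mul]; rfl

theorem isUnit_leftAdjointOfNondegenerate_mul_self (hB : B.Nondegenerate) (P : V ≃ₗ[K] V) :
    IsUnit (B.leftAdjointOfNondegenerate hB P * (P : Module.End K V)) := by
  rw [LinearMap.isUnit_iff_ker_eq_bot, LinearMap.ker_eq_bot']
  intro x hx
  have hPx : P x = 0 := hB.1 _ fun z ↦ by
    have h := B.isAdjointPairLeftAdjointOfNondegenerate hB P (P x) (P.symm z)
    simp only [LinearEquiv.coe_coe, LinearEquiv.apply_symm_apply] at h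
    exact h ▸ (congrArg (B · _) hx).trans (by simp)
  simpa using hPx

theorem commute_leftAdjointOfNondegenerate_mul_self (hB : B.Nondegenerate) {ε : K}
    (hε : ε * ε = 1) (hsymm : ∀ x y, B x y = ε * B y x) {C : Module.End K V}
    (hC : ∀ x y, B (C x) y = -B x (C y)) {P : Module.End K V}
    (hP : ∀ x y, B (P (C x)) (P y) = B (C x) y) :
    Commute (B.leftAdjointOfNondegenerate hB P * P) C := by
  have hadj := B.isAdjointPairLeftAdjointOfNondegenerate hB P
  have hinj : Injective B := LinearMap.ker_eq_bot.mp hB.ker_eq_bot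
  have hUC : B.leftAdjointOfNondegenerate hB P * P * C = C :=
    LinearMap.ext fun x ↦ hinj <| LinearMap.ext fun y ↦ (hadj _ _).trans (hP x y)
  have hCU : C * (B.leftAdjointOfNondegenerate hB P * P) = C := by
    refine LinearMap.ext fun x ↦ hinj <| LinearMap.ext fun y ↦ ?_
    calc B (C (B.leftAdjointOfNondegenerate hB P (P x))) y
        = -(ε * B (P (C y)) (P x)) := by rw [hC, hadj, hsymm]
      _ = ε * (ε * B (C x) y) := by rw [hP, hsymm, hC]; ring
      _ = B (C x) y := by rw [← mul_assoc, hε, one_mul]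
  exact hUC.trans hCU.symm

variable [IsAlgClosed K] [NeZero (2 : K)]

theorem exists_linearEquiv_commute_and_pullback_eq (hB : B.Nondegenerate) {ε : K}
    (hε : ε * ε = 1) (hsymm : ∀ x y, B x y = ε * B y x) {C : Module.End K V}
    (hC : ∀ x y, B (C x) y = -B x (C y)) (P : V ≃ₗ[K] V)
    (hP : ∀ x y, B (P (C x)) (P y) = B (C x) y) :
    ∃ W : V ≃ₗ[K] V, (∀ x, W (C x) = C (W x)) ∧
      ∀ x y, B (W x) (W y) = B (P x) (P y) := by
  have hU := isUnit_leftAdjointOfNondegenerate_mul_self hB P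
  obtain ⟨p, hp⟩ := Module.End.exists_aeval_sq_eq_of_isUnit hU
  set S := aeval (B.leftAdjointOfNondegenerate hB P * (P : Module.End K V)) p
  have hS : IsUnit S := (isUnit_pow_iff two_ne_zero).mp (hp ▸ hU)
  have hSadj := (isAdjointPair_leftAdjointOfNondegenerate_mul_self hB hε hsymm P).aeval p
  have hSC := (commute_leftAdjointOfNondegenerate_mul_self hB hε hsymm hC hP).aeval_left p
  refine ⟨GeneralLinearGroup.generalLinearEquiv K V hS.unit,
    fun x ↦ LinearMap.congr_fun hSC.eq x, fun x y ↦ ?_⟩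
  change B (S x) (S y) = B (P x) (P y)
  rw [← hSadj, ← Module.End.mul_apply, ← sq, hp]
  exact B.isAdjointPairLeftAdjointOfNondegenerate hB P _ _

theorem exists_isometry_conj_eq (hB : B.Nondegenerate) {ε : K}
    (hε : ε * ε = 1) (hsymm : ∀ x y, B x y = ε * B y x) {C : Module.End K V}
    (hC : ∀ x y, B (C x) y = -B x (C y)) (P : V ≃ₗ[K] V)
    (hP : ∀ x y, B (P (C x)) (P y) = B (C x) y) :
    ∃ P' : V ≃ₗ[K] V, (∀ x y, B (P' x) (P' y) = B x y) ∧
      ∀ x, P' (C (P'.symm x)) = P (C (P.symm x)) := by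
  obtain ⟨W, hWC, hW⟩ := exists_linearEquiv_commute_and_pullback_eq hB hε hsymm hC P hP
  refine ⟨W.symm.trans P, fun x y ↦ ?_, fun x ↦ ?_⟩
  · simp [← hW]
  · simp [← hWC]

end LinearMap.BilinForm

theorem stmt1_general {q0 q1 : Type*}
    [AddCommGroup q0] [Module ℂ q0] [FiniteDimensional ℂ q0]
    [AddCommGroup q1] [Module ℂ q1] [FiniteDimensional ℂ q1]
    (B0 : LinearMap.BilinForm ℂ q0) (hB0 : B0.Nondegenerate)
    (hB0symm : ∀ x y : q0, B0 x y = B0 y x)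
    (B1 : LinearMap.BilinForm ℂ q1) (hB1 : B1.Nondegenerate)
    (hB1alt : ∀ u v : q1, B1 u v = - B1 v u)
    (C0 C0' : q0 →ₗ[ℂ] q0) (C1 C1' : q1 →ₗ[ℂ] q1)
    (hC0 : ∀ x y : q0, B0 (C0 x) y = - B0 x (C0 y))
    (hC1 : ∀ u v : q1, B1 (C1 u) v = - B1 u (C1 v)) :
    (∃ (P : q0 ≃ₗ[ℂ] q0) (Q : q1 ≃ₗ[ℂ] q1) (lam : ℂ), lam ≠ 0 ∧
        (∀ x : q0, C0' x = lam • P (C0 (P.symm x))) ∧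
        (∀ x y : q0, B0 (P (C0 x)) (P y) = B0 (C0 x) y) ∧
        (∀ u : q1, C1' u = lam • Q (C1 (Q.symm u))) ∧
        (∀ u v : q1, B1 (Q (C1 u)) (Q v) = B1 (C1 u) v)) ↔
    (∃ (mu : ℂ) (P' : q0 ≃ₗ[ℂ] q0) (Q' : q1 ≃ₗ[ℂ] q1), mu ≠ 0 ∧
        (∀ x y : q0, B0 (P' x) (P' y) = B0 x y) ∧
        (∀ u v : q1, B1 (Q' u) (Q' v) = B1 u v) ∧
        (∀ x : q0, C0' x = mu • P' (C0 (P'.symm x))) ∧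
        (∀ u : q1, C1' u = mu • Q' (C1 (Q'.symm u)))) := by
  constructor
  · rintro ⟨P, Q, lam, hlam, hC0P, hP, hC1Q, hQ⟩
    obtain ⟨P', hP'iso, hP'conj⟩ := LinearMap.BilinForm.exists_isometry_conj_eq hB0
      (ε := 1) (by norm_num) (by simpa using hB0symm) hC0 P hP
    obtain ⟨Q', hQ'iso, hQ'conj⟩ := LinearMap.BilinForm.exists_isometry_conj_eq hB1
      (ε := -1) (by norm_num) (by simpa using hB1alt) hC1 Q hQ
    exact ⟨lam, P', Q', hlam, hP'iso, hQ'iso, fun x ↦ by rw [hC0P, hP'conj],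
      fun u ↦ by rw [hC1Q, hQ'conj]⟩
  · rintro ⟨mu, P', Q', hmu, hP', hQ', hC0P, hC1Q⟩
    exact ⟨P', Q', mu, hmu, hC0P, fun x y ↦ hP' _ _, hC1Q, fun u v ↦ hQ' _ _⟩

/-- Isomorphism vs. isometric isomorphism criterion for double extensions
of a quadratic space `(q₀, B₀)` and a symplectic space `(q₁, B₁)` by skew-symmetric maps
`C₀ + C₁` and `C₀' + C₁'` with `C₁ ≠ 0`. -/
theorem stmt1 {q0 q1 : Type*}
    [AddCommGroup q0] [Module ℂ q0] [FiniteDimensional ℂ q0]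
    [AddCommGroup q1] [Module ℂ q1] [FiniteDimensional ℂ q1]
    (B0 : LinearMap.BilinForm ℂ q0) (hB0 : B0.Nondegenerate)
    (hB0symm : ∀ x y : q0, B0 x y = B0 y x)
    (B1 : LinearMap.BilinForm ℂ q1) (hB1 : B1.Nondegenerate)
    (hB1alt : ∀ u v : q1, B1 u v = - B1 v u)
    (C0 C0' : q0 →ₗ[ℂ] q0) (C1 C1' : q1 →ₗ[ℂ] q1)
    (hC0 : ∀ x y : q0, B0 (C0 x) y = - B0 x (C0 y))
    (hC0' : ∀ x y : q0, B0 (C0' x) y = - B0 x (C0' y))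
    (hC1 : ∀ u v : q1, B1 (C1 u) v = - B1 u (C1 v))
    (hC1' : ∀ u v : q1, B1 (C1' u) v = - B1 u (C1' v))
    (hC1ne : C1 ≠ 0) :
    (∃ (P : q0 ≃ₗ[ℂ] q0) (Q : q1 ≃ₗ[ℂ] q1) (lam : ℂ), lam ≠ 0 ∧
        (∀ x : q0, C0' x = lam • P (C0 (P.symm x))) ∧
        (∀ x y : q0, B0 (P (C0 x)) (P y) = B0 (C0 x) y) ∧
        (∀ u : q1, C1' u = lam • Q (C1 (Q.symm u))) ∧
        (∀ u v : q1, B1 (Q (C1 u)) (Q v) = B1 (C1 u) v)) ↔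
    (∃ (mu : ℂ) (P' : q0 ≃ₗ[ℂ] q0) (Q' : q1 ≃ₗ[ℂ] q1), mu ≠ 0 ∧
        (∀ x y : q0, B0 (P' x) (P' y) = B0 x y) ∧
        (∀ u v : q1, B1 (Q' u) (Q' v) = B1 u v) ∧
        (∀ x : q0, C0' x = mu • P' (C0 (P'.symm x))) ∧
        (∀ u : q1, C1' u = mu • Q' (C1 (Q'.symm u)))) :=
  stmt1_general B0 hB0 hB0symm B1 hB1 hB1alt C0 C0' C1 C1' hC0 hC1
end

section
/- Let (V, B) be a symplectic vector space over ℂ and let C be a nilpotent endomorphism of V that is skew-symmetric with respect to B. Then for every odd integer k ≥ 1, the number dim ker(C^{k-1}) + dim ker(C^{k+1}) is even; equivalently, every odd part of the Jordan partition of C occurs with even multiplicity, so the Jordan partition of C belongs to the set P₋₁(dim V) of partitions in which odd parts occur with even multiplicity. -/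
/-!
For even `m`, the form `(x, y) ↦ B (C^m x) y` is again skew-symmetric, and since `B` is
nondegenerate its kernel is `ker C^m`. A skew-symmetric form has even rank: on a complement of
its kernel it is nondegenerate, and a nondegenerate skew-symmetric form lives in even dimension
because its Gram matrix satisfies `det M = det Mᵀ = (-1)^n det M`. Hence
`dim ker C^m ≡ dim V (mod 2)` for all even `m`; apply this to `m = k - 1` and `m = k + 1`.
-/

open Module Matrix LinearMap
open LinearMap (BilinForm)

namespace LinearMap.IsAdjointPair

variable {R M : Type*} [CommSemiring R] [AddCommMonoid M] [Module R M]

theorem pow {B : BilinForm R M} {f g : Module.End R M} (h : IsAdjointPair B B f g) (n : ℕ) :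
    IsAdjointPair B B ⇑(f ^ n) ⇑(g ^ n) := by
  induction n with
  | zero => exact isAdjointPair_one
  | succ n ih => rw [pow_succ, pow_succ']; exact ih.mul h

end LinearMap.IsAdjointPair

namespace LinearMap.BilinForm

variable {K V : Type*} [Field K] [AddCommGroup V] [Module K V]

theorem even_finrank_of_nondegenerate_of_skew [FiniteDimensional K V] (hK : ringChar K ≠ 2)
    {B : BilinForm K V} (hB : B.Nondegenerate) (hskew : ∀ x y, B x y = -B y x) :
    Even (finrank K V) := by
  let b := Module.finBasis K V
  set M := BilinForm.toMatrix b B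
  have hMt : Mᵀ = -M := by
    ext i j
    simp [M, BilinForm.toMatrix_apply, hskew (b j) (b i)]
  have hdet : M.det ≠ 0 := (BilinForm.nondegenerate_iff_det_ne_zero b).mp hB
  have hpow : (-1 : K) ^ finrank K V = 1 := by
    have := congrArg Matrix.det hMt
    rw [det_transpose, det_neg, Fintype.card_fin] at this
    exact mul_right_cancel₀ hdet (by rw [one_mul, ← this])
  exact (neg_one_pow_eq_one_iff_even (Ring.neg_one_ne_one_of_char_ne_two hK)).mp hpow

theorem nondegenerate_restrict_of_isCompl_ker {B : BilinForm K V} (hB : B.IsRefl)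
    {W : Submodule K V} (hW : IsCompl (ker B) W) : (B.restrict W).Nondegenerate := by
  have hrefl : (B.restrict W).IsRefl := fun x y => hB x y
  refine (IsRefl.nondegenerate_iff_separatingLeft hrefl).mpr fun z hz => ?_
  suffices hzker : (z : V) ∈ ker B by
    simpa using hW.inf_eq_bot.le ⟨hzker, z.2⟩
  ext v
  obtain ⟨k, hk, w, hw, rfl⟩ := Submodule.mem_sup.mp (hW.sup_eq_top ▸ Submodule.mem_top : v ∈ _)
  have hzk : B z k = 0 := hB k z (by simp [mem_ker.mp hk])
  simpa [hzk] using hz ⟨w, hw⟩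

theorem even_finrank_range_of_skew [FiniteDimensional K V] (hK : ringChar K ≠ 2)
    {B : BilinForm K V} (hskew : ∀ x y, B x y = -B y x) : Even (finrank K (range B)) := by
  obtain ⟨W, hW⟩ := Submodule.exists_isCompl (ker B)
  have hrefl : B.IsRefl := fun x y h => by rw [hskew, h, neg_zero]
  have hWeven : Even (finrank K W) :=
    even_finrank_of_nondegenerate_of_skew hK (nondegenerate_restrict_of_isCompl_ker hrefl hW)
      fun x y => hskew x y
  have h₁ := finrank_range_add_finrank_ker B
  have h₂ := Submodule.finrank_add_eq_of_isCompl hW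
  rwa [show finrank K (range B) = finrank K W by omega]

theorem even_finrank_ker_add_finrank_of_isAdjointPair [FiniteDimensional K V]
    (hK : ringChar K ≠ 2) {B : BilinForm K V} (hB : B.Nondegenerate)
    (hskew : ∀ x y, B x y = -B y x) {f : Module.End K V} (hf : IsAdjointPair B B f f) :
    Even (finrank K (ker f) + finrank K V) := by
  have hBf_skew : ∀ x y, (B ∘ₗ f) x y = -(B ∘ₗ f) y x := fun x y => by
    simp only [LinearMap.comp_apply, hf x y, hskew x (f y)]
  have hker : ker (B ∘ₗ f) = ker f :=
    ker_comp_of_ker_eq_bot f (separatingLeft_iff_ker_eq_bot.mp hB.1)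
  obtain ⟨r, hr⟩ := even_finrank_range_of_skew hK hBf_skew
  have := finrank_range_add_finrank_ker (B ∘ₗ f)
  exact ⟨finrank K (ker f) + r, by rw [hker] at this; omega⟩

end LinearMap.BilinForm

theorem stmt5_general {V : Type*} [AddCommGroup V] [Module ℂ V] [FiniteDimensional ℂ V]
    (B : LinearMap.BilinForm ℂ V) (hB : B.Nondegenerate)
    (hBalt : ∀ x y : V, B x y = - B y x)
    (C : V →ₗ[ℂ] V)
    (hC : ∀ x y : V, B (C x) y = - B x (C y)) :
    ∀ k : ℕ, 1 ≤ k → Odd k →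
      Even (Module.finrank ℂ (LinearMap.ker (C ^ (k - 1))) +
        Module.finrank ℂ (LinearMap.ker (C ^ (k + 1)))) := by
  intro k _ ⟨j, hj⟩
  have hCadj : IsAdjointPair B B ⇑C ⇑(-C) := fun x y => by simp [hC]
  have hparity (m : ℕ) (hm : Even m) : Even (finrank ℂ (ker (C ^ m)) + finrank ℂ V) :=
    BilinForm.even_finrank_ker_add_finrank_of_isAdjointPair (by simp) hB hBalt
      (by simpa only [hm.neg_pow] using hCadj.pow m)
  have h₁ := hparity (k - 1) ⟨j, by omega⟩
  have h₂ := hparity (k + 1) ⟨j + 1, by omega⟩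
  rw [Nat.even_iff] at h₁ h₂ ⊢
  omega

/-- For a nilpotent skew-symmetric endomorphism of a symplectic vector
space over `ℂ`, for every odd `k ≥ 1` the number
`dim ker (C^(k-1)) + dim ker (C^(k+1))` is even, i.e. odd parts of the Jordan
partition of `C` occur with even multiplicity. -/
theorem stmt5 {V : Type*} [AddCommGroup V] [Module ℂ V] [FiniteDimensional ℂ V]
    (B : LinearMap.BilinForm ℂ V) (hB : B.Nondegenerate)
    (hBalt : ∀ x y : V, B x y = - B y x)
    (C : V →ₗ[ℂ] V) (hCnil : IsNilpotent C)
    (hC : ∀ x y : V, B (C x) y = - B x (C y)) :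
    ∀ k : ℕ, 1 ≤ k → Odd k →
      Even (Module.finrank ℂ (LinearMap.ker (C ^ (k - 1))) +
        Module.finrank ℂ (LinearMap.ker (C ^ (k + 1)))) :=
  stmt5_general B hB hBalt C hC
end

section
/- Let (V, B) be a symplectic vector space over ℂ and let C, C' be nilpotent endomorphisms of V, both skew-symmetric with respect to B. Then there exist a nonzero scalar λ ∈ ℂ and an isometry P of (V, B) with C = λ • (P ∘ C' ∘ P⁻¹) if and only if there exists an isometry Q of (V, B) with C = Q ∘ C' ∘ Q⁻¹. -/
/-
Scaling a nilpotent `C'` by `λ ≠ 0` does not change its similarity class. Pick `v`, `k` with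
`C'^k v ≠ 0 = C'^(k+1)` and a functional `φ` with `φ (C'^k v) ≠ 0`; since the pairing
`φ (C'^(i+j) v)` is antitriangular with nonzero antidiagonal, `span {v, C' v, …, C'^k v}` has the
`C'`-stable complement `{x | φ (C'^j x) = 0 for j ≤ k}`. Rescaling `C'^i v ↦ λ^i C'^i v` on the
cyclic part and inducting on the dimension gives an invertible `S` with `S C' S⁻¹ = λ C'`.

It remains to replace `S` by an isometry. Let `A = S^† S` (adjoint with respect to `B`). Since `C'`
and `λ C'` are both skew, `A` commutes with `C'`; it is invertible and self-adjoint. Over `ℂ` it has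
a square root `T = p(A)` which is a polynomial in `A` (interpolate square roots of the eigenvalues,
then run Newton's iteration modulo the minimal polynomial), so `T` is self-adjoint and commutes
with `C'`. Then `Q = S T⁻¹` is an isometry with `Q C' Q⁻¹ = λ C'`, and `P Q` conjugates `C'` to `C`.
-/

open Polynomial

namespace Module.End

variable {K V : Type*} [Field K] [AddCommGroup V] [Module K V] {C : Module.End K V}

open Submodule

theorem pow_apply_eq_zero_of_le {v : V} {k n : ℕ} (hv : (C ^ k) v = 0) (hkn : k ≤ n) :
    (C ^ n) v = 0 := by
  rw [← Nat.sub_add_cancel hkn, pow_add, mul_apply, hv, map_zero]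

theorem eq_zero_of_forall_dual_pow_sum_eq_zero {k : ℕ} {v : V} {φ : Module.Dual K V}
    (hv : (C ^ (k + 1)) v = 0) (hφ : φ ((C ^ k) v) ≠ 0) {a : Fin (k + 1) → K}
    (ha : ∀ j : Fin (k + 1), φ ((C ^ (j : ℕ)) (∑ i, a i • (C ^ (i : ℕ)) v)) = 0) : a = 0 := by
  by_contra hne
  obtain ⟨m, hm, hmin⟩ := wellFounded_lt.has_min {i | a i ≠ 0} (Function.ne_iff.mp hne)
  -- pairing with `C ^ (k - m)` kills every term but the one of the lowest index `m`
  have hterm : ∀ i, φ ((C ^ (k - m : ℕ)) (a i • (C ^ (i : ℕ)) v)) =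
      a i * φ ((C ^ (k - m + i : ℕ)) v) := fun i => by
    rw [map_smul, map_smul, ← mul_apply, ← pow_add, smul_eq_mul]
  have := ha m.rev
  rw [Fin.val_rev, show k + 1 - (m + 1) = k - m by omega, map_sum, map_sum,
    Finset.sum_eq_single m (fun i _ him => ?_) (by simp), hterm,
    show k - m + m = k by omega] at this
  · exact hm (mul_eq_zero.mp this |>.resolve_right hφ)
  rw [hterm]
  rcases lt_or_gt_of_ne him with hlt | hgt
  · rw [not_not.mp fun h => hmin i h hlt, zero_mul]
  · rw [pow_apply_eq_zero_of_le hv (by omega), map_zero, mul_zero]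

variable (C) in
def cyclicSpan (v : V) (k : ℕ) : Submodule K V :=
  span K (Set.range fun i : Fin k => (C ^ (i : ℕ)) v)

theorem pow_apply_mem_cyclicSpan {v : V} {k : ℕ} (hv : (C ^ k) v = 0) (n : ℕ) :
    (C ^ n) v ∈ C.cyclicSpan v k := by
  rcases lt_or_ge n k with hn | hn
  · exact subset_span ⟨⟨n, hn⟩, rfl⟩
  · rw [pow_apply_eq_zero_of_le hv hn]
    exact zero_mem _

theorem apply_mem_cyclicSpan {v : V} {k : ℕ} (hv : (C ^ k) v = 0) :
    ∀ x ∈ C.cyclicSpan v k, C x ∈ C.cyclicSpan v k := by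
  refine fun x hx => (span_le (p := (C.cyclicSpan v k).comap C)).mpr ?_ hx
  rintro _ ⟨i, rfl⟩
  rw [SetLike.mem_coe, mem_comap, ← mul_apply, ← pow_succ']
  exact pow_apply_mem_cyclicSpan hv _

theorem linearIndependent_pow_apply {k : ℕ} {v : V} {φ : Module.Dual K V}
    (hv : (C ^ (k + 1)) v = 0) (hφ : φ ((C ^ k) v) ≠ 0) :
    LinearIndependent K fun i : Fin (k + 1) => (C ^ (i : ℕ)) v :=
  Fintype.linearIndependent_iff.mpr fun a ha =>
    congrFun (eq_zero_of_forall_dual_pow_sum_eq_zero hv hφ fun j => by rw [ha, map_zero, map_zero])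

theorem exists_isCompl_cyclicSpan [FiniteDimensional K V] {k : ℕ} (hk : C ^ (k + 1) = 0) {v : V}
    {φ : Module.Dual K V} (hφ : φ ((C ^ k) v) ≠ 0) :
    ∃ W : Submodule K V, IsCompl (C.cyclicSpan v (k + 1)) W ∧ ∀ x ∈ W, C x ∈ W := by
  have hv : (C ^ (k + 1)) v = 0 := by rw [hk, LinearMap.zero_apply]
  set Ψ : V →ₗ[K] Fin (k + 1) → K := LinearMap.pi fun j : Fin (k + 1) => φ ∘ₗ C ^ (j : ℕ)
  have hmem : ∀ x, x ∈ LinearMap.ker Ψ ↔ ∀ j : Fin (k + 1), φ ((C ^ (j : ℕ)) x) = 0 := fun x => by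
    simp [Ψ, funext_iff]
  refine ⟨LinearMap.ker Ψ, (isCompl_iff_disjoint _ _ ?_).mpr ?_, fun x hx => ?_⟩
  · have hU := finrank_span_eq_card (linearIndependent_pow_apply hv hφ)
    have hΨ := (LinearMap.range Ψ).finrank_le
    rw [Module.finrank_fin_fun] at hΨ
    rw [cyclicSpan, hU, Fintype.card_fin]
    linarith [LinearMap.finrank_range_add_finrank_ker Ψ]
  · refine disjoint_def.mpr fun x hxU hxW => ?_
    obtain ⟨a, rfl⟩ := mem_span_range_iff_exists_fun K |>.mp hxU
    simp [eq_zero_of_forall_dual_pow_sum_eq_zero hv hφ ((hmem _).mp hxW)]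
  · refine (hmem _).mpr fun j => ?_
    rw [← mul_apply, ← pow_succ]
    rcases lt_or_ge ((j : ℕ) + 1) (k + 1) with hj | hj
    · exact (hmem x).mp hx ⟨_, hj⟩
    · rw [pow_apply_eq_zero_of_le (by rw [hk, LinearMap.zero_apply]) hj, map_zero]

theorem exists_conj_smul_restrict_cyclicSpan {k : ℕ} {v : V} (hv : (C ^ k) v = 0)
    (hli : LinearIndependent K fun i : Fin k => (C ^ (i : ℕ)) v)
    (hU : ∀ x ∈ C.cyclicSpan v k, C x ∈ C.cyclicSpan v k) {c : K} (hc : c ≠ 0) :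
    ∃ S : C.cyclicSpan v k ≃ₗ[K] C.cyclicSpan v k,
      ∀ x, S (C.restrict hU x) = c • C.restrict hU (S x) := by
  set b : Basis (Fin k) K (C.cyclicSpan v k) := Basis.span hli
  set S := b.equiv (b.unitsSMul fun i => Units.mk0 c hc ^ (i : ℕ)) (Equiv.refl _)
  have hS : ∀ n, (S ⟨_, pow_apply_mem_cyclicSpan hv n⟩ : V) = c ^ n • (C ^ n) v := fun n => by
    rcases lt_or_ge n k with hn | hn
    · have hb : b ⟨n, hn⟩ = ⟨_, pow_apply_mem_cyclicSpan hv n⟩ := Basis.span_apply hli _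
      rw [← hb, Basis.equiv_apply, Basis.unitsSMul_apply, Equiv.refl_apply, hb, Units.smul_def,
        Units.val_pow_eq_pow_val, Units.val_mk0]
      rfl
    · have h0 : (⟨_, pow_apply_mem_cyclicSpan hv n⟩ : C.cyclicSpan v k) = 0 :=
        Subtype.ext (pow_apply_eq_zero_of_le hv hn)
      rw [h0, map_zero, ZeroMemClass.coe_zero, pow_apply_eq_zero_of_le hv hn, smul_zero]
  suffices key : (S : C.cyclicSpan v k →ₗ[K] C.cyclicSpan v k) ∘ₗ C.restrict hU =
      c • (C.restrict hU ∘ₗ S) from ⟨S, LinearMap.congr_fun key⟩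
  refine b.ext fun i => Subtype.ext ?_
  have hbi : b i = ⟨_, pow_apply_mem_cyclicSpan hv i⟩ := Basis.span_apply hli i
  have hCb : C.restrict hU (b i) = ⟨_, pow_apply_mem_cyclicSpan hv (i + 1)⟩ :=
    Subtype.ext <| by
      rw [hbi, LinearMap.coe_restrict_apply]
      show C ((C ^ (i : ℕ)) v) = (C ^ ((i : ℕ) + 1)) v
      rw [pow_succ', mul_apply]
  simp only [LinearMap.comp_apply, LinearMap.smul_apply, LinearEquiv.coe_coe, hCb, hS,
    SetLike.val_smul, LinearMap.coe_restrict_apply]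
  rw [hbi, hS, map_smul, ← mul_apply, ← pow_succ', smul_smul, pow_succ']

theorem exists_conj_smul_of_isCompl {U W : Submodule K V} (hUW : IsCompl U W)
    (hU : ∀ x ∈ U, C x ∈ U) (hW : ∀ x ∈ W, C x ∈ W) {c : K} {SU : U ≃ₗ[K] U} {SW : W ≃ₗ[K] W}
    (hSU : ∀ x, SU (C.restrict hU x) = c • C.restrict hU (SU x))
    (hSW : ∀ x, SW (C.restrict hW x) = c • C.restrict hW (SW x)) :
    ∃ S : V ≃ₗ[K] V, ∀ x, S (C x) = c • C (S x) := by
  set e := prodEquivOfIsCompl U W hUW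
  have he : ∀ u w, e (u, w) = (u : V) + w := fun _ _ => rfl
  have hCe : ∀ u w, C (e (u, w)) = e (C.restrict hU u, C.restrict hW w) := fun u w => by
    simp only [he, map_add, LinearMap.coe_restrict_apply]
  refine ⟨e.symm.trans ((SU.prodCongr SW).trans e), fun x => ?_⟩
  obtain ⟨⟨u, w⟩, rfl⟩ := e.surjective x
  simp only [LinearEquiv.trans_apply, LinearEquiv.symm_apply_apply, hCe,
    LinearEquiv.prodCongr_apply, hSU, hSW]
  rw [← Prod.smul_mk, map_smul]

theorem exists_conj_smul_of_isNilpotent [FiniteDimensional K V] (hC : IsNilpotent C) {c : K}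
    (hc : c ≠ 0) : ∃ S : V ≃ₗ[K] V, ∀ x, S (C x) = c • C (S x) := by
  induction h : Module.finrank K V using Nat.strong_induction_on generalizing V with
  | _ n ih =>
    rcases subsingleton_or_nontrivial V with hV | hV
    · exact ⟨LinearEquiv.refl K V, fun _ => Subsingleton.elim _ _⟩
    obtain ⟨k, hk⟩ := Nat.exists_eq_add_one.mpr (pos_nilpotencyClass_iff.mpr hC)
    obtain ⟨hCk, hCk'⟩ := nilpotencyClass_eq_succ_iff.mp hk
    obtain ⟨v, hv⟩ := DFunLike.ne_iff.mp hCk'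
    obtain ⟨φ, hφ⟩ : ∃ φ : Module.Dual K V, φ ((C ^ k) v) ≠ 0 := by
      by_contra! hφ
      exact hv ((Module.forall_dual_apply_eq_zero_iff K _).mp hφ)
    have hv' : (C ^ (k + 1)) v = 0 := by rw [hCk, LinearMap.zero_apply]
    have hli := linearIndependent_pow_apply hv' hφ
    obtain ⟨W, hUW, hW⟩ := exists_isCompl_cyclicSpan hCk hφ
    have hdim := Submodule.finrank_add_eq_of_isCompl hUW
    rw [cyclicSpan, finrank_span_eq_card hli, Fintype.card_fin] at hdim
    obtain ⟨SW, hSW⟩ := ih _ (by omega) (isNilpotent.restrict hW hC) rfl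
    obtain ⟨SU, hSU⟩ := exists_conj_smul_restrict_cyclicSpan hv' hli (apply_mem_cyclicSpan hv') hc
    exact exists_conj_smul_of_isCompl hUW _ hW hSU hSW

end Module.End

theorem isSquare_of_isNilpotent_sq_sub {R : Type*} [CommRing R] {u a : R}
    (h2 : IsUnit (2 : R)) (hu : IsUnit u) (ha : IsNilpotent (a ^ 2 - u)) : IsSquare u := by
  suffices newton : ∀ (n : ℕ) (a : R), (a ^ 2 - u) ^ 2 ^ n = 0 → IsSquare u by
    obtain ⟨n, hn⟩ := ha
    exact newton n a (pow_eq_zero_of_le Nat.lt_two_pow_self.le hn)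
  intro n
  induction n with
  | zero =>
    intro a ha
    exact ⟨a, by linear_combination -(pow_one (a ^ 2 - u)).symm.trans ha⟩
  | succ n ih =>
    intro a ha
    have ha2 : IsUnit (a ^ 2) := by
      simpa using (IsNilpotent.isUnit_add_left_of_commute ⟨_, ha⟩ hu (Commute.all _ _))
    obtain ⟨w, hw⟩ := h2.mul ((isUnit_pow_iff two_ne_zero).mp ha2)
    -- Newton's step `a ↦ a - (a² - u) / 2a` squares the error `a² - u`.
    have hinv : 2 * a * ↑w⁻¹ = 1 := hw ▸ w.mul_inv
    refine ih (a - (a ^ 2 - u) * ↑w⁻¹) ?_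
    have hstep : (a - (a ^ 2 - u) * ↑w⁻¹) ^ 2 - u = ((a ^ 2 - u) * ↑w⁻¹) ^ 2 := by
      linear_combination (u - a ^ 2) * hinv
    rw [hstep, ← pow_mul, ← pow_succ', mul_pow, ha, zero_mul]

theorem Polynomial.dvd_pow_natDegree_of_forall_isRoot {K : Type*} [Field K] [IsAlgClosed K]
    {f g : K[X]} (hf : f ≠ 0) (h : ∀ a, f.IsRoot a → g.IsRoot a) : f ∣ g ^ f.natDegree := by
  classical
  rcases eq_or_ne g 0 with rfl | hg
  · rcases (natDegree f).eq_zero_or_pos with h0 | h0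
    · rw [h0, pow_zero]
      exact isUnit_iff_degree_eq_zero.mpr ((degree_eq_iff_natDegree_eq hf).mpr h0) |>.dvd
    · rw [zero_pow h0.ne']
      exact dvd_zero f
  refine (IsAlgClosed.splits f).dvd_of_roots_le_roots hf (Multiset.le_iff_count.mpr fun a => ?_)
  rw [roots_pow, Multiset.count_nsmul]
  by_cases ha : a ∈ f.roots
  · have hga : 0 < g.roots.count a :=
      Multiset.count_pos.mpr ((mem_roots hg).mpr (h a (isRoot_of_mem_roots ha)))
    calc f.roots.count a ≤ f.natDegree := (Multiset.count_le_card a _).trans (card_roots' f)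
      _ ≤ f.natDegree * g.roots.count a := Nat.le_mul_of_pos_right _ hga
  · simp [Multiset.count_eq_zero.mpr ha]

theorem Module.End.exists_aeval_sq_eq {K V : Type*} [Field K] [IsAlgClosed K] [NeZero (2 : K)]
    [AddCommGroup V] [Module K V] [FiniteDimensional K V] {A : Module.End K V}
    (hA : Function.Injective A) : ∃ p : K[X], aeval A p ^ 2 = A := by
  classical
  set μ := minpoly K A
  have hμ : μ ≠ 0 := minpoly.ne_zero (Algebra.IsIntegral.isIntegral A)
  have hμ0 : ¬ μ.IsRoot 0 :=
    ((LinearMap.not_hasEigenvalue_zero_tfae A).out 1 5).mpr fun x hx => hA (by simpa using hx)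
  choose r hr using fun a : K => IsAlgClosed.exists_pow_nat_eq a two_pos
  -- `p₀` takes a square root at each eigenvalue, so `p₀(A)² - A` is nilpotent.
  set p₀ := Lagrange.interpolate μ.roots.toFinset id r
  have hp₀ : μ ∣ (p₀ ^ 2 - X) ^ μ.natDegree := by
    refine dvd_pow_natDegree_of_forall_isRoot hμ fun a ha => ?_
    have hmem : a ∈ μ.roots.toFinset := Multiset.mem_toFinset.mpr ((mem_roots hμ).mpr ha)
    have hp₀a : eval a p₀ = r a := Lagrange.eval_interpolate_at_node r (Set.injOn_id _) hmem
    simp only [IsRoot.def, eval_sub, eval_pow, eval_X, hp₀a, hr, sub_self]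
  have hX : IsUnit (AdjoinRoot.root μ) := by
    obtain ⟨a, b, hab⟩ := (irreducible_X.coprime_iff_not_dvd (n := μ)).mpr
      (by rwa [X_dvd_iff, coeff_zero_eq_eval_zero])
    refine IsUnit.of_mul_eq_one (AdjoinRoot.mk μ a) ?_
    simpa [mul_comm] using congrArg (AdjoinRoot.mk μ) hab
  have h2 : IsUnit (2 : AdjoinRoot μ) := by
    have := (IsUnit.mk0 (2 : K) two_ne_zero).map (algebraMap K (AdjoinRoot μ))
    rwa [map_ofNat] at this
  obtain ⟨t, ht⟩ := isSquare_of_isNilpotent_sq_sub (a := AdjoinRoot.mk μ p₀) h2 hX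
    ⟨μ.natDegree, by
      rwa [← AdjoinRoot.mk_X, ← map_pow, ← map_sub, ← map_pow, AdjoinRoot.mk_eq_zero]⟩
  obtain ⟨q, rfl⟩ := AdjoinRoot.mk_surjective t
  obtain ⟨w, hw⟩ := AdjoinRoot.mk_eq_mk.mp
    (show AdjoinRoot.mk μ (q * q) = AdjoinRoot.mk μ X by rw [map_mul, ← ht, AdjoinRoot.mk_X])
  have hq : aeval A (q * q - X) = 0 := by rw [hw, map_mul, minpoly.aeval, zero_mul]
  refine ⟨q, ?_⟩
  rwa [map_sub, aeval_X, map_mul, sub_eq_zero, ← sq] at hq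

theorem LinearMap.IsSelfAdjoint.aeval {K V : Type*} [Field K] [AddCommGroup V] [Module K V]
    {B : LinearMap.BilinForm K V} {A : Module.End K V} (hA : B.IsSelfAdjoint A) (p : K[X]) :
    B.IsSelfAdjoint ⇑(aeval A p) := by
  have hpow : ∀ n : ℕ, B.IsSelfAdjoint ⇑(A ^ n) := by
    intro n
    induction n with
    | zero => exact LinearMap.isAdjointPair_one
    | succ n ih =>
      have := ih.mul hA
      rwa [← pow_succ, ← pow_succ'] at this
  induction p using Polynomial.induction_on' with
  | add p q hp hq =>
    rw [map_add]
    exact hp.add hq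
  | monomial n a =>
    have := (hpow n).smul a
    rwa [aeval_monomial]

namespace LinearMap.BilinForm

variable {K V : Type*} [Field K] [AddCommGroup V] [Module K V] {B : LinearMap.BilinForm K V}

theorem exists_isSelfAdjoint_sqrt [IsAlgClosed K] [NeZero (2 : K)] [FiniteDimensional K V]
    {A D : Module.End K V} (hA : Function.Injective A) (hAsa : B.IsSelfAdjoint A)
    (hAD : Commute A D) :
    ∃ T : V ≃ₗ[K] V, (∀ x, T (T x) = A x) ∧ B.IsSelfAdjoint T ∧ ∀ x, T (D x) = D (T x) := by
  obtain ⟨p, hp⟩ := Module.End.exists_aeval_sq_eq hA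
  have hT : ∀ x, aeval A p (aeval A p x) = A x := fun x => by rw [← Module.End.mul_apply, ← sq, hp]
  have hTinj : Function.Injective (aeval A p) := fun x y hxy => hA (by rw [← hT, ← hT, hxy])
  have hTD : Commute (aeval A p) D :=
    (Algebra.commute_of_mem_adjoin_singleton_of_commute (aeval_mem_adjoin_singleton K A)
      hAD.symm).symm
  exact ⟨.ofInjectiveEndo _ hTinj, hT, hAsa.aeval p, fun x => congr($hTD x)⟩

theorem exists_isOrthogonal_conj_of_conj [IsAlgClosed K] [NeZero (2 : K)] [FiniteDimensional K V]
    (hB : B.Nondegenerate) (hBanti : ∀ x y, B x y = -B y x) {D E : Module.End K V}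
    (hD : B.IsSkewAdjoint D) (hE : B.IsSkewAdjoint E) (S : V ≃ₗ[K] V)
    (hS : ∀ x, S (D x) = E (S x)) :
    ∃ Q : V ≃ₗ[K] V, B.IsOrthogonal Q ∧ ∀ x, Q (D x) = E (Q x) := by
  set A := B.leftAdjointOfNondegenerate hB S ∘ₗ (S : Module.End K V)
  have hA : ∀ x y, B (A x) y = B (S x) (S y) := fun x y =>
    B.isAdjointPairLeftAdjointOfNondegenerate hB S (S x) y
  have hAinj : Function.Injective A := by
    refine (injective_iff_map_eq_zero A).mpr fun x hx => S.map_eq_zero_iff.mp (hB.1 _ fun y => ?_)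
    rw [← S.apply_symm_apply y, ← hA, hx, map_zero, LinearMap.zero_apply]
  have hAsa : B.IsSelfAdjoint A := fun x y => by
    rw [hA, hBanti, ← hA, hBanti, neg_neg]
  have hAD : Commute A D := by
    ext x
    refine sub_eq_zero.mp (hB.1 _ fun y => ?_)
    rw [Module.End.mul_apply, Module.End.mul_apply, map_sub, LinearMap.sub_apply, hA, hS, hE,
      Pi.neg_apply, map_neg, ← hS, ← hA, hD, Pi.neg_apply, map_neg, sub_self]
  obtain ⟨T, hTT, hTsa, hTD⟩ := exists_isSelfAdjoint_sqrt hAinj hAsa hAD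
  refine ⟨T.symm.trans S, fun x y => ?_, fun x => ?_⟩
  · simp only [LinearEquiv.trans_apply]
    rw [← hA, ← hTT, T.apply_symm_apply, hTsa, T.apply_symm_apply]
  · have : T.symm (D x) = D (T.symm x) := T.symm_apply_eq.mpr (by rw [hTD, T.apply_symm_apply])
    simp only [LinearEquiv.trans_apply, this, hS]

end LinearMap.BilinForm

theorem stmt14_general {V : Type*} [AddCommGroup V] [Module ℂ V] [FiniteDimensional ℂ V]
    (B : LinearMap.BilinForm ℂ V) (hB : B.Nondegenerate)
    (hBalt : ∀ x y : V, B x y = - B y x)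
    (C C' : V →ₗ[ℂ] V)
    (hC'nil : IsNilpotent C')
    (hC' : ∀ x y : V, B (C' x) y = - B x (C' y)) :
    (∃ (lam : ℂ) (P : V ≃ₗ[ℂ] V), lam ≠ 0 ∧
        (∀ x y : V, B (P x) (P y) = B x y) ∧
        (∀ x : V, C x = lam • P (C' (P.symm x)))) ↔
    (∃ Q : V ≃ₗ[ℂ] V, (∀ x y : V, B (Q x) (Q y) = B x y) ∧
        ∀ x : V, C x = Q (C' (Q.symm x))) := by
  constructor
  · rintro ⟨lam, P, hlam, hP, hPC⟩
    have hC'skew : B.IsSkewAdjoint C' := fun x y => by rw [hC', Pi.neg_apply, map_neg]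
    have hlamC'skew : B.IsSkewAdjoint ⇑(lam • C') := by
      have := hC'skew.smul lam
      rwa [smul_neg] at this
    obtain ⟨S, hS⟩ := Module.End.exists_conj_smul_of_isNilpotent hC'nil hlam
    obtain ⟨Q, hQ, hQC⟩ := B.exists_isOrthogonal_conj_of_conj hB hBalt hC'skew hlamC'skew S hS
    refine ⟨Q.trans P, fun x y => by simp only [LinearEquiv.trans_apply, hP, hQ x y], fun x => ?_⟩
    rw [hPC, LinearEquiv.trans_symm, LinearEquiv.trans_apply, LinearEquiv.trans_apply, hQC,
      Q.apply_symm_apply, LinearMap.smul_apply, map_smul]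
  · rintro ⟨Q, hQ, hQC⟩
    exact ⟨1, Q, one_ne_zero, hQ, fun x => by rw [one_smul, hQC]⟩

/-- For nilpotent skew-symmetric endomorphisms `C, C'` of a symplectic
vector space over `ℂ`, `C` is conjugate to a nonzero multiple of `C'` by an isometry
iff `C` is conjugate to `C'` by an isometry. -/
theorem stmt14 {V : Type*} [AddCommGroup V] [Module ℂ V] [FiniteDimensional ℂ V]
    (B : LinearMap.BilinForm ℂ V) (hB : B.Nondegenerate)
    (hBalt : ∀ x y : V, B x y = - B y x)
    (C C' : V →ₗ[ℂ] V)
    (hCnil : IsNilpotent C) (hC'nil : IsNilpotent C')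
    (hC : ∀ x y : V, B (C x) y = - B x (C y))
    (hC' : ∀ x y : V, B (C' x) y = - B x (C' y)) :
    (∃ (lam : ℂ) (P : V ≃ₗ[ℂ] V), lam ≠ 0 ∧
        (∀ x y : V, B (P x) (P y) = B x y) ∧
        (∀ x : V, C x = lam • P (C' (P.symm x)))) ↔
    (∃ Q : V ≃ₗ[ℂ] V, (∀ x y : V, B (Q x) (Q y) = B x y) ∧
        ∀ x : V, C x = Q (C' (Q.symm x))) :=
  stmt14_general B hB hBalt C C' hC'nil hC'
end
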